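/- Define the norm ‖v‖_T^2 = sup over nonempty S ⊆ [d] of (log(2d/|S|))^4 · ∑_{j∈S} v_j^2 for v ∈ R^d. Then for a standard Gaussian vector w ~ N(0, I_d), E[‖w‖_T] ≤ C√d for an absolute constant C. -/

import Mathlib

/-!
Fix a nonempty `S` with `|S| = k` and put `L = log (2d/k) ≥ 0`. The elementary inequality
`L⁴ a ≤ 4 e^{a/4} + 16 L⁵` bounds each term of `L⁴ ∑_{j∈S} w_j²`, and `k L⁵ ≤ 5⁵ · 2d` because
`log u ≤ 5 u^{1/5}`. Hence `‖w‖_T² ≤ 100000 d + 4 ∑_j e^{w_j²/4}` uniformly in `S`, and the right-hand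
side has expectation `O(d)` since `𝔼 e^{t g²} = (1 - 2t)^{-1/2}` for `t < 1/2`. Finally
`√x ≤ (x + d) / (2√d)` turns this into `𝔼‖w‖_T = O(√d)`.
-/

open MeasureTheory ProbabilityTheory

/-- The square of the norm `‖·‖_T`:
`‖v‖_T² = sup_{∅ ≠ S ⊆ [d]} (log(2d/|S|))⁴ ∑_{j∈S} v j²`. -/
noncomputable def TnormSq (d : ℕ) (v : Fin d → ℝ) : ℝ :=
  ⨆ S : {S : Finset (Fin d) // S.Nonempty},
    (Real.log (2 * d / (S : Finset (Fin d)).card)) ^ 4 * ∑ j ∈ (S : Finset (Fin d)), v j ^ 2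

/-- The norm `‖·‖_T` on `ℝ^d`. -/
noncomputable def Tnorm (d : ℕ) (v : Fin d → ℝ) : ℝ :=
  Real.sqrt (TnormSq d v)

open Real

lemma pow_le_exp_mul {x : ℝ} (hx : 0 ≤ x) (n : ℕ) : x ^ n ≤ exp (n * x) := by
  rw [exp_nat_mul]
  exact pow_le_pow_left₀ hx (by linarith [add_one_le_exp x]) n

lemma log_pow_le_pow_mul {x : ℝ} (hx : 1 ≤ x) (n : ℕ) : log x ^ n ≤ n ^ n * x := by
  rcases n.eq_zero_or_pos with rfl | hn
  · simpa using hx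
  have hlog : log x ≤ n * x ^ ((n : ℝ)⁻¹) := by
    simpa [div_inv_eq_mul, mul_comm] using
      log_le_rpow_div (by linarith) (inv_pos.2 (Nat.cast_pos.2 hn))
  calc log x ^ n ≤ (n * x ^ ((n : ℝ)⁻¹)) ^ n := pow_le_pow_left₀ (log_nonneg hx) hlog n
    _ = n ^ n * x := by rw [mul_pow, rpow_inv_natCast_pow (by linarith) hn.ne']

lemma pow_four_mul_le_exp_add {L : ℝ} (hL : 0 ≤ L) (a : ℝ) :
    L ^ 4 * a ≤ 4 * exp (4⁻¹ * a) + 16 * L ^ 5 := by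
  -- `e^y ≥ 1 + y` at `y = (a - 16 L) / 4`, and `L⁴ e^{-4L} ≤ 1`
  have hexp : a ≤ 4 * exp (-(4 * L)) * exp (4⁻¹ * a) + 16 * L := by
    rw [mul_assoc, ← exp_add]
    linarith [add_one_le_exp (-(4 * L) + 4⁻¹ * a)]
  have hL4 : L ^ 4 * exp (-(4 * L)) ≤ 1 := by
    have := pow_le_exp_mul hL 4
    rw [← le_div_iff₀ (exp_pos _), exp_neg, div_inv_eq_mul, one_mul]
    exact_mod_cast this
  have hpos : 0 ≤ L ^ 4 := by positivity
  nlinarith [mul_le_mul_of_nonneg_left hexp hpos, exp_pos (4⁻¹ * a)]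

lemma sqrt_le_add_div_two_sqrt {x c : ℝ} (hx : 0 ≤ x) (hc : 0 < c) :
    √x ≤ (x + c) / (2 * √c) := by
  rw [le_div_iff₀ (by positivity)]
  nlinarith [sq_sqrt hx, sq_sqrt hc.le, sq_nonneg (√x - √c)]

lemma gaussianPDFReal_mul_exp_mul_sq (t x : ℝ) :
    gaussianPDFReal 0 1 x * exp (t * x ^ 2) = (√(2 * π))⁻¹ * exp (-(1 / 2 - t) * x ^ 2) := by
  rw [gaussianPDFReal, mul_assoc, ← exp_add]
  congr 2
  · simp
  · push_cast; ring

lemma integrable_exp_mul_sq_gaussianReal {t : ℝ} (ht : t < 1 / 2) :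
    Integrable (fun x ↦ exp (t * x ^ 2)) (gaussianReal 0 1) := by
  rw [gaussianReal_of_var_ne_zero 0 one_ne_zero, integrable_withDensity_iff_integrable_smul'
    (measurable_gaussianPDF 0 1) (ae_of_all _ fun _ ↦ gaussianPDF_lt_top)]
  simp_rw [toReal_gaussianPDF, smul_eq_mul, gaussianPDFReal_mul_exp_mul_sq]
  exact (integrable_exp_neg_mul_sq (by linarith)).const_mul _

-- For `t ≥ 1 / 2` both sides are junk zeros: the integrand is not integrable and `√` of a
-- nonpositive number is `0`.
lemma integral_exp_mul_sq_gaussianReal (t : ℝ) :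
    ∫ x, exp (t * x ^ 2) ∂(gaussianReal 0 1) = (√(1 - 2 * t))⁻¹ := by
  simp_rw [integral_gaussianReal_eq_integral_smul one_ne_zero, smul_eq_mul,
    gaussianPDFReal_mul_exp_mul_sq, integral_const_mul, integral_gaussian]
  rw [← sqrt_inv, ← sqrt_mul (by positivity), ← sqrt_inv]
  congr 1
  field_simp

section SumCompEval

variable {ι X : Type*} [Fintype ι] [MeasurableSpace X] {ν : Measure X} [IsProbabilityMeasure ν]
  {f : X → ℝ}

lemma integrable_sum_comp_eval (hf : Integrable f ν) :
    Integrable (fun x ↦ ∑ i, f (x i)) (Measure.pi fun _ : ι ↦ ν) :=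
  integrable_finsetSum _ fun _ _ ↦ integrable_comp_eval hf

lemma integral_sum_comp_eval (hf : Integrable f ν) :
    ∫ x, ∑ i, f (x i) ∂(Measure.pi fun _ : ι ↦ ν) = Fintype.card ι * ∫ y, f y ∂ν := by
  rw [integral_finsetSum _ fun i _ ↦ integrable_comp_eval hf]
  simp_rw [integral_comp_eval (μ := fun _ : ι ↦ ν) hf.aestronglyMeasurable]
  simp

end SumCompEval

lemma TnormSq_nonneg {d : ℕ} (hd : 0 < d) (w : Fin d → ℝ) : 0 ≤ TnormSq d w :=
  le_ciSup_of_le (Set.finite_range _).bddAbove ⟨{⟨0, hd⟩}, Finset.singleton_nonempty _⟩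
    (by positivity)

lemma TnormSq_le {d : ℕ} (hd : 0 < d) (w : Fin d → ℝ) :
    TnormSq d w ≤ 100000 * d + 4 * ∑ j, exp (4⁻¹ * w j ^ 2) := by
  have : Nonempty {S : Finset (Fin d) // S.Nonempty} :=
    ⟨⟨{⟨0, hd⟩}, Finset.singleton_nonempty _⟩⟩
  refine ciSup_le fun ⟨S, hS⟩ ↦ ?_
  have hk : (0 : ℝ) < S.card := by exact_mod_cast hS.card_pos
  have hkd : (S.card : ℝ) ≤ d := by exact_mod_cast card_finset_fin_le S
  have hu : 1 ≤ 2 * d / (S.card : ℝ) := by rw [le_div_iff₀ hk]; linarith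
  set L := log (2 * d / (S.card : ℝ))
  have hL : 0 ≤ L := log_nonneg hu
  have hkL : S.card * L ^ 5 ≤ 6250 * d := by
    have := mul_le_mul_of_nonneg_left (log_pow_le_pow_mul hu 5) hk.le
    rwa [mul_left_comm, mul_div_cancel₀ _ hk.ne', show ((5 : ℕ) : ℝ) ^ 5 * (2 * d) = 6250 * d by
      norm_num; ring] at this
  have hsub : ∑ j ∈ S, exp (4⁻¹ * w j ^ 2) ≤ ∑ j, exp (4⁻¹ * w j ^ 2) :=
    Finset.sum_le_sum_of_subset_of_nonneg (Finset.subset_univ S) fun _ _ _ ↦ (exp_pos _).le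
  calc L ^ 4 * ∑ j ∈ S, w j ^ 2
      ≤ ∑ j ∈ S, (4 * exp (4⁻¹ * w j ^ 2) + 16 * L ^ 5) := by
        rw [Finset.mul_sum]
        exact Finset.sum_le_sum fun j _ ↦ pow_four_mul_le_exp_add hL _
    _ = 4 * ∑ j ∈ S, exp (4⁻¹ * w j ^ 2) + 16 * (S.card * L ^ 5) := by
        rw [Finset.sum_add_distrib, ← Finset.mul_sum, Finset.sum_const, nsmul_eq_mul]; ring
    _ ≤ 100000 * d + 4 * ∑ j, exp (4⁻¹ * w j ^ 2) := by linarith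

lemma Tnorm_le {d : ℕ} (hd : 0 < d) (w : Fin d → ℝ) :
    Tnorm d w ≤ (100001 * d + 4 * ∑ j, exp (4⁻¹ * w j ^ 2)) / (2 * √d) := by
  have hd0 : (0 : ℝ) < d := by exact_mod_cast hd
  refine (sqrt_le_add_div_two_sqrt (TnormSq_nonneg hd w) hd0).trans ?_
  exact div_le_div_of_nonneg_right (by linarith [TnormSq_le hd w]) (by positivity)

/-- For a standard Gaussian vector `w ~ N(0, I_d)`, `𝔼‖w‖_T ≤ C √d`. -/
theorem stmt2 :
    ∃ C : ℝ, 0 < C ∧ ∀ d : ℕ, 0 < d →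
      ∫ w : Fin d → ℝ, Tnorm d w ∂(Measure.pi fun _ : Fin d => gaussianReal 0 1)
        ≤ C * Real.sqrt d := by
  refine ⟨100009 / 2, by norm_num, fun d hd ↦ ?_⟩
  have hd0 : (0 : ℝ) < d := by exact_mod_cast hd
  have hexp := integrable_exp_mul_sq_gaussianReal (t := 4⁻¹) (by norm_num)
  have hsum := integrable_sum_comp_eval (ι := Fin d) hexp
  have hmoment : ∫ x, exp (4⁻¹ * x ^ 2) ∂gaussianReal 0 1 ≤ 2 := by
    rw [integral_exp_mul_sq_gaussianReal, inv_le_comm₀ (by positivity) two_pos,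
      le_sqrt (by norm_num) (by norm_num)]
    norm_num
  calc ∫ w, Tnorm d w ∂(Measure.pi fun _ ↦ gaussianReal 0 1)
      ≤ ∫ w, (100001 * d + 4 * ∑ j, exp (4⁻¹ * w j ^ 2)) / (2 * √d)
          ∂(Measure.pi fun _ ↦ gaussianReal 0 1) :=
        integral_mono_of_nonneg (ae_of_all _ fun w ↦ sqrt_nonneg _)
          (((integrable_const _).add (hsum.const_mul 4)).div_const _) (ae_of_all _ (Tnorm_le hd))
    _ = (100001 * d + 4 * (d * ∫ x, exp (4⁻¹ * x ^ 2) ∂gaussianReal 0 1)) / (2 * √d) := by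
        rw [integral_div, integral_add (integrable_const _) (hsum.const_mul 4), integral_const,
          integral_const_mul, integral_sum_comp_eval hexp]
        simp
    _ ≤ 100009 * d / (2 * √d) := by gcongr; nlinarith
    _ = 100009 / 2 * √d := by
        rw [div_eq_iff (by positivity)]
        linear_combination -100009 * mul_self_sqrt hd0.le
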